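/- arXiv:2406.15139 — 4 statements merged into one kernel-verified Lean document; each statement's English description precedes it below -/
import Mathlib

section
/- Let a_{ij}(p) := (δ_{ij} + p_i p_j)/p0 with p0 = sqrt(1+|p|^2). Then for all p ∈ ℝ^d, Σ_{k,l,i,j=1}^d p0^2 (δ_{kl} − p_k p_l/p0^2)(δ_{ij} − p_i p_j/p0^2) ∇_p a_{lj} ⊗ ∇_p a_{ki} = 2(I − p⊗p/p0^2) − (2/p0^2)(I − p⊗p/p0^2) + (d−2) (p⊗p)/p0^4; in particular this matrix is ≤ d (I − p⊗p/p0^2) in the Loewner order. -/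
/-!
Write `v = p`, `r = p₀` and `D = (1 + v vᵀ)/r`, so that `∇a_{lj}` has entries `(∂_m D)_{lj}`.
Since `r² = 1 + |v|²`, the matrix `P = 1 - v vᵀ/r²` is the inverse of `1 + v vᵀ`, i.e.
`D⁻¹ = r P`. The quadruple sum is therefore the matrix of traces `tr (D⁻¹ ∂_m D D⁻¹ ∂_n D)`, and
`D⁻¹ ∂_m D = e_m vᵀ + (v e_mᵀ - v_m v vᵀ - v_m 1)/r²` is a combination of rank-one matrices and the
identity, whose products have traces given by dot products.
Subtracting the result from `d P` leaves `(d/r⁴) 1 + (((d-2) r² + d)/r⁴) (|v|² 1 - v vᵀ)`; the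
last matrix is positive semidefinite by Cauchy–Schwarz and vanishes when `d ≤ 1`.
-/

/-- The entries `a_{ij}(p) = (δ_{ij} + p_i p_j)/p₀` of `D(p) = (I + p⊗p)/p₀`. -/
noncomputable def aEntry (d : ℕ) (i j : Fin d) (q : EuclideanSpace ℝ (Fin d)) : ℝ :=
  ((if i = j then (1 : ℝ) else 0) + q i * q j) / Real.sqrt (1 + ‖q‖ ^ 2)

/-- The gradient `∇_p a_{ij}` as a vector in `ℝ^d`. -/
noncomputable def gradA (d : ℕ) (i j : Fin d) (p : EuclideanSpace ℝ (Fin d)) : Fin d → ℝ :=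
  fun m => fderiv ℝ (aEntry d i j) p (EuclideanSpace.single m 1)

open Matrix

theorem Matrix.sum_quadruple_eq_trace {ι R : Type*} [Fintype ι] [CommSemiring R]
    (A B C E : Matrix ι ι R) :
    ∑ k, ∑ l, ∑ i, ∑ j, A k l * C i j * (B l j * E k i) = trace (A * B * Cᵀ * Eᵀ) := by
  simp only [trace, diag, mul_apply, transpose_apply, Finset.sum_mul]
  refine Finset.sum_congr rfl fun k _ => ?_
  rw [Finset.sum_comm]
  refine Finset.sum_congr rfl fun i _ => ?_
  rw [Finset.sum_comm]
  exact Finset.sum_congr rfl fun j _ => Finset.sum_congr rfl fun l _ => by ring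

theorem Matrix.posSemidef_dotProduct_self_smul_one_sub_vecMulVec {ι : Type*} [Fintype ι]
    [DecidableEq ι] (v : ι → ℝ) : ((v ⬝ᵥ v) • 1 - vecMulVec v v).PosSemidef := by
  rw [posSemidef_iff_dotProduct_mulVec]
  refine ⟨by simp [IsHermitian, transpose_vecMulVec], fun x => ?_⟩
  have hCS := Finset.sum_mul_sq_le_sq_mul_sq Finset.univ v x
  simp only [star_trivial, sub_mulVec, smul_mulVec, one_mulVec, vecMulVec_mulVec,
    dotProduct_sub, dotProduct_smul, smul_eq_mul]
  simp only [dotProduct, ← sq, MulOpposite.smul_eq_mul_unop, MulOpposite.unop_op,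
    mul_comm (x _) (v _)] at hCS ⊢
  linarith

namespace RelDiffusion

variable {ι : Type*} [DecidableEq ι]

noncomputable def P (v : ι → ℝ) (r : ℝ) : Matrix ι ι ℝ := 1 - (1 / r ^ 2) • vecMulVec v v

-- `∂D/∂v_m` for `D = (1 + v vᵀ)/r`, where `r = √(1 + |v|²)`.
noncomputable def partialD (v : ι → ℝ) (r : ℝ) (m : ι) : Matrix ι ι ℝ :=
  r⁻¹ • (vecMulVec (Pi.single m 1) v + vecMulVec v (Pi.single m 1))
    - (v m / r ^ 3) • (1 + vecMulVec v v)

noncomputable def invDMulPartialD (v : ι → ℝ) (r : ℝ) (m : ι) : Matrix ι ι ℝ :=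
  vecMulVec (Pi.single m 1) v - (v m / r ^ 2) • vecMulVec v v
    + (1 / r ^ 2) • vecMulVec v (Pi.single m 1) - (v m / r ^ 2) • 1

noncomputable def gradSum [Fintype ι] (v : ι → ℝ) (r : ℝ) : Matrix ι ι ℝ :=
  ∑ k, ∑ l, ∑ i, ∑ j, (r ^ 2 * P v r k l * P v r i j) •
    vecMulVec (fun m => partialD v r m l j) (fun n => partialD v r n k i)

variable {v : ι → ℝ} {r : ℝ}

lemma P_apply (k l : ι) : P v r k l = (if k = l then 1 else 0) - v k * v l / r ^ 2 := by
  rw [P, Matrix.sub_apply, one_apply, Matrix.smul_apply, vecMulVec_apply, smul_eq_mul]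
  ring

lemma P_transpose : (P v r)ᵀ = P v r := by
  simp [P, transpose_vecMulVec]

lemma partialD_transpose (m : ι) : (partialD v r m)ᵀ = partialD v r m := by
  simp only [partialD, transpose_sub, transpose_smul, transpose_add, transpose_vecMulVec,
    transpose_one, add_comm (vecMulVec v _)]

variable [Fintype ι]

lemma P_mulVec_self (hr : r ^ 2 = 1 + v ⬝ᵥ v) (hr0 : r ≠ 0) : P v r *ᵥ v = (1 / r ^ 2) • v := by
  rw [P, sub_mulVec, one_mulVec, smul_mulVec, vecMulVec_mulVec, op_smul_eq_smul, smul_smul,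
    show v ⬝ᵥ v = r ^ 2 - 1 by linarith]
  match_scalars
  field_simp
  ring

lemma P_mulVec_single (m : ι) : P v r *ᵥ Pi.single m 1 = Pi.single m 1 - (v m / r ^ 2) • v := by
  rw [P, sub_mulVec, one_mulVec, smul_mulVec, vecMulVec_mulVec, op_smul_eq_smul, smul_smul,
    dotProduct_single_one, one_div, mul_comm, ← div_eq_mul_inv]

lemma P_mul_one_add_vecMulVec (hr : r ^ 2 = 1 + v ⬝ᵥ v) (hr0 : r ≠ 0) :
    P v r * (1 + vecMulVec v v) = 1 := by
  rw [mul_add, mul_one, mul_vecMulVec, P_mulVec_self hr hr0, P, smul_vecMulVec]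
  abel

lemma smul_P_mul_partialD (hr : r ^ 2 = 1 + v ⬝ᵥ v) (hr0 : r ≠ 0) (m : ι) :
    r • (P v r * partialD v r m) = invDMulPartialD v r m := by
  rw [invDMulPartialD, partialD, Matrix.mul_sub, Matrix.mul_smul, Matrix.mul_smul,
    P_mul_one_add_vecMulVec hr hr0, mul_add, mul_vecMulVec, mul_vecMulVec, P_mulVec_single,
    P_mulVec_self hr hr0, sub_vecMulVec, ← smul_vecMulVec, ← smul_vecMulVec, smul_sub,
    smul_smul, smul_smul, smul_add, smul_sub]
  have hc : r * (v m / r ^ 3) = v m / r ^ 2 := by field_simp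
  simp only [mul_inv_cancel₀ hr0, one_smul, hc]

lemma trace_invDMulPartialD_mul (hr : r ^ 2 = 1 + v ⬝ᵥ v) (hr0 : r ≠ 0) (m n : ι) :
    trace (invDMulPartialD v r m * invDMulPartialD v r n) =
      2 * (1 - 1 / r ^ 2) * (if m = n then 1 else 0)
        + (Fintype.card ι - 2 * r ^ 2) / r ^ 4 * (v m * v n) := by
  have hT : v ⬝ᵥ v = r ^ 2 - 1 := by linarith
  simp only [invDMulPartialD, add_mul, sub_mul, mul_add, mul_sub, Matrix.smul_mul,
    Matrix.mul_smul, mul_one, one_mul, vecMulVec_mul_vecMulVec, trace_add, trace_sub, trace_smul,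
    trace_vecMulVec, trace_one, dotProduct_smul, single_one_dotProduct, dotProduct_single_one, hT]
  obtain rfl | hmn := eq_or_ne m n
  · simp only [Pi.single_eq_same, if_true, smul_eq_mul]
    field_simp
    ring
  · simp only [Pi.single_eq_of_ne hmn.symm, if_neg hmn, smul_eq_mul]
    field_simp
    ring

lemma gradSum_apply (hr : r ^ 2 = 1 + v ⬝ᵥ v) (hr0 : r ≠ 0) (m n : ι) :
    gradSum v r m n = trace (invDMulPartialD v r m * invDMulPartialD v r n) := by
  have h4 := sum_quadruple_eq_trace (P v r) (partialD v r m) (P v r) (partialD v r n)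
  rw [P_transpose, partialD_transpose] at h4
  calc gradSum v r m n = r ^ 2 * trace (P v r * partialD v r m * P v r * partialD v r n) := by
        rw [← h4]
        simp only [gradSum, Matrix.sum_apply, Matrix.smul_apply, vecMulVec_apply, smul_eq_mul,
          Finset.mul_sum, mul_assoc]
    _ = trace ((r • (P v r * partialD v r m)) * (r • (P v r * partialD v r n))) := by
        rw [Matrix.smul_mul, Matrix.mul_smul, smul_smul, trace_smul, smul_eq_mul, sq]
        simp only [Matrix.mul_assoc]
    _ = _ := by rw [smul_P_mul_partialD hr hr0, smul_P_mul_partialD hr hr0]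

lemma gradSum_eq (hr : r ^ 2 = 1 + v ⬝ᵥ v) (hr0 : r ≠ 0) :
    gradSum v r = (2 : ℝ) • P v r - (2 / r ^ 2) • P v r
      + (((Fintype.card ι : ℝ) - 2) / r ^ 4) • vecMulVec v v := by
  ext m n
  rw [gradSum_apply hr hr0, trace_invDMulPartialD_mul hr hr0]
  simp only [Matrix.add_apply, Matrix.sub_apply, Matrix.smul_apply, P_apply, vecMulVec_apply,
    smul_eq_mul]
  field_simp
  ring

lemma card_smul_P_sub_gradSum_eq (hr : r ^ 2 = 1 + v ⬝ᵥ v) (hr0 : r ≠ 0) :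
    (Fintype.card ι : ℝ) • P v r - gradSum v r =
      (Fintype.card ι / r ^ 4) • (1 : Matrix ι ι ℝ)
        + (((Fintype.card ι - 2) * r ^ 2 + Fintype.card ι) / r ^ 4) •
          ((v ⬝ᵥ v) • 1 - vecMulVec v v) := by
  have hT : v ⬝ᵥ v = r ^ 2 - 1 := by linarith
  ext m n
  rw [gradSum_eq hr hr0, hT]
  simp only [Matrix.add_apply, Matrix.sub_apply, Matrix.smul_apply, P_apply, vecMulVec_apply,
    one_apply, smul_eq_mul]
  split_ifs <;> field_simp <;> ring

lemma posSemidef_card_smul_P_sub_gradSum (hr : r ^ 2 = 1 + v ⬝ᵥ v) (hr0 : r ≠ 0) :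
    ((Fintype.card ι : ℝ) • P v r - gradSum v r).PosSemidef := by
  rw [card_smul_P_sub_gradSum_eq hr hr0]
  refine PosSemidef.one.smul (by positivity) |>.add ?_
  rcases le_or_gt (Fintype.card ι) 1 with hd | hd
  · have := Fintype.card_le_one_iff_subsingleton.1 hd
    have h0 : (v ⬝ᵥ v) • (1 : Matrix ι ι ℝ) - vecMulVec v v = 0 := by
      ext m n
      obtain rfl := Subsingleton.elim m n
      simp [dotProduct, Fintype.sum_subsingleton _ m, vecMulVec_apply]
    rw [h0, smul_zero]
    exact PosSemidef.zero
  · have hd' : (2 : ℝ) ≤ Fintype.card ι := by exact_mod_cast hd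
    exact (posSemidef_dotProduct_self_smul_one_sub_vecMulVec v).smul (by positivity)

end RelDiffusion

theorem gradA_eq_partialD (d : ℕ) (i j : Fin d) (p : EuclideanSpace ℝ (Fin d)) :
    gradA d i j p = fun m => RelDiffusion.partialD p.ofLp (√(1 + ‖p‖ ^ 2)) m i j := by
  ext m
  have hpos : 0 < 1 + ‖p‖ ^ 2 := by positivity
  have hr0 : √(1 + ‖p‖ ^ 2) ≠ 0 := (Real.sqrt_pos.2 hpos).ne'
  have hproj (k : Fin d) := (EuclideanSpace.proj (𝕜 := ℝ) k).hasFDerivAt (x := p)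
  have hnum := ((hproj i).mul (hproj j)).const_add (if i = j then (1 : ℝ) else 0)
  have hden := (hasDerivAt_inv hr0).comp_hasFDerivAt p
    (((hasStrictFDerivAt_norm_sq p).hasFDerivAt.const_add 1).sqrt hpos.ne')
  have h : HasFDerivAt (aEntry d i j) _ p := hnum.mul hden
  rw [gradA, h.fderiv]
  simp only [EuclideanSpace.coe_proj, Pi.mul_apply, one_div, _root_.mul_inv_rev, neg_smul, smul_neg,
    PiLp.proj_apply, smul_add, _root_.add_apply, _root_.neg_apply, _root_.smul_apply, coe_innerSL_apply,
    EuclideanSpace.inner_single_right, Real.ringHom_apply, one_mul, nsmul_eq_mul, Nat.cast_ofNat,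
    smul_eq_mul, PiLp.single_apply, mul_ite, mul_one, mul_zero, RelDiffusion.partialD,
    Matrix.sub_apply, Matrix.add_apply, Matrix.smul_apply, vecMulVec_apply, Pi.single_apply, ite_mul,
    zero_mul, one_apply]
  generalize √(1 + ‖p‖ ^ 2) = r at hr0 ⊢
  split_ifs <;> field_simp <;> ring

/-- The identity
`Σ_{k,l,i,j} p₀² (δ_{kl} − p_k p_l/p₀²)(δ_{ij} − p_i p_j/p₀²) ∇a_{lj} ⊗ ∇a_{ki}
 = 2(I − p⊗p/p₀²) − (2/p₀²)(I − p⊗p/p₀²) + (d−2) p⊗p/p₀⁴`,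
and this matrix is `≤ d (I − p⊗p/p₀²)` in the Loewner order. -/
theorem gradA_sum (d : ℕ) (p : EuclideanSpace ℝ (Fin d)) :
    let p₀ : ℝ := Real.sqrt (1 + ‖p‖ ^ 2)
    let pp : Matrix (Fin d) (Fin d) ℝ := Matrix.vecMulVec (fun m => p m) (fun m => p m)
    let S : Matrix (Fin d) (Fin d) ℝ :=
      ∑ k, ∑ l, ∑ i, ∑ j,
        (p₀ ^ 2 * ((if k = l then 1 else 0) - p k * p l / p₀ ^ 2) *
            ((if i = j then 1 else 0) - p i * p j / p₀ ^ 2)) •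
          Matrix.vecMulVec (gradA d l j p) (gradA d k i p)
    S = (2 : ℝ) • ((1 : Matrix (Fin d) (Fin d) ℝ) - (1 / p₀ ^ 2) • pp)
        - (2 / p₀ ^ 2) • ((1 : Matrix (Fin d) (Fin d) ℝ) - (1 / p₀ ^ 2) • pp)
        + (((d : ℝ) - 2) / p₀ ^ 4) • pp
      ∧ Matrix.PosSemidef
          ((d : ℝ) • ((1 : Matrix (Fin d) (Fin d) ℝ) - (1 / p₀ ^ 2) • pp) - S) := by
  intro p₀ pp S
  have hr : p₀ ^ 2 = 1 + p.ofLp ⬝ᵥ p.ofLp := by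
    rw [Real.sq_sqrt (by positivity), EuclideanSpace.real_norm_sq_eq]
    simp [dotProduct, sq]
  have hr0 : p₀ ≠ 0 := Real.sqrt_ne_zero'.2 (by positivity)
  have hS : S = RelDiffusion.gradSum p.ofLp p₀ := by
    simp only [S, RelDiffusion.gradSum, ← RelDiffusion.P_apply, gradA_eq_partialD]
    rfl
  have hd : (Fintype.card (Fin d) : ℝ) = d := by simp
  rw [hS]
  refine ⟨?_, ?_⟩
  · rw [RelDiffusion.gradSum_eq hr hr0, hd]
    rfl
  · have h := RelDiffusion.posSemidef_card_smul_P_sub_gradSum hr hr0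
    rw [hd] at h
    exact h
end

section
/- Let a_{ij}(p) := (δ_{ij} + p_i p_j)/p0 with p0 = sqrt(1+|p|^2). Then for all p ∈ ℝ^d, Σ_{k,l,i,j=1}^d p0^2 (δ_{kl} − p_k p_l/p0^2)(δ_{ij} − p_i p_j/p0^2) ((I+p⊗p)∇_p a_{lj}) ⊗ ((I+p⊗p)∇_p a_{ki}) = d(I + p⊗p) − (d−2) I − (2/p0^2)(I + p⊗p); in particular this matrix is ≤ d (I + p⊗p) in the Loewner order. -/
open Matrix

section Algebra

variable {n : Type*} [Fintype n]

theorem trace_mul_mul_mul {R : Type*} [CommSemiring R] (A B C D : Matrix n n R) :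
    trace (A * B * C * D) = ∑ k, ∑ l, ∑ i, ∑ j, A k l * B l j * C j i * D i k := by
  simp only [trace, diag, mul_apply, Finset.sum_mul]
  exact Finset.sum_congr rfl fun k _ =>
    (Finset.sum_congr rfl fun i _ => Finset.sum_comm).trans Finset.sum_comm

theorem one_add_dotProduct_self_pos (v : n → ℝ) : 0 < 1 + v ⬝ᵥ v := by
  have := dotProduct_star_self_nonneg v
  rw [star_trivial] at this
  linarith

variable [DecidableEq n] (v : n → ℝ)

/-- For `v = p`, `scaledGrad v m i j = p₀ ((I + p⊗p) ∇_p a_{ij})_m`. -/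
noncomputable def scaledGrad (m : n) : Matrix n n ℝ :=
  vecMulVec (Pi.single m 1) v + vecMulVec v (Pi.single m 1) + v m • (vecMulVec v v - 1)

noncomputable def reducedGrad (m : n) : Matrix n n ℝ :=
  vecMulVec (Pi.single m 1) v + (1 + v ⬝ᵥ v)⁻¹ • vecMulVec v (Pi.single m 1 + v m • v) - v m • 1

omit [Fintype n] in
theorem isSymm_scaledGrad (m : n) : (scaledGrad v m).IsSymm := by
  simp only [IsSymm, scaledGrad, transpose_add, transpose_smul, transpose_sub, transpose_one,
    transpose_vecMulVec]
  abel

theorem one_sub_smul_vecMulVec_mul_scaledGrad (m : n) :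
    (1 - (1 + v ⬝ᵥ v)⁻¹ • vecMulVec v v) * scaledGrad v m = reducedGrad v m := by
  have hs := (one_add_dotProduct_self_pos v).ne'
  simp only [scaledGrad, reducedGrad, mul_add, mul_sub, mul_smul_comm, mul_vecMulVec, mul_one,
    sub_mulVec, one_mulVec, smul_mulVec, vecMulVec_mulVec, op_smul_eq_smul, dotProduct_single_one,
    sub_vecMulVec, smul_vecMulVec, vecMulVec_add, vecMulVec_smul, smul_sub, smul_add]
  match_scalars <;> field_simp <;> ring

theorem trace_reducedGrad_mul (m m' : n) :
    trace (reducedGrad v m * reducedGrad v m') =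
      ((Fintype.card n : ℝ) • (1 + vecMulVec v v) - ((Fintype.card n : ℝ) - 2) • 1
        - (2 / (1 + v ⬝ᵥ v)) • (1 + vecMulVec v v)) m m' := by
  have hs := (one_add_dotProduct_self_pos v).ne'
  simp only [reducedGrad, add_mul, mul_add, sub_mul, mul_sub, Matrix.smul_mul, Matrix.mul_smul,
    vecMulVec_mul_vecMulVec, mul_one, one_mul, trace_add, trace_sub, trace_smul, trace_vecMulVec,
    trace_one, smul_eq_mul, single_one_dotProduct, dotProduct_single_one, dotProduct_add,
    add_dotProduct, dotProduct_smul, smul_dotProduct, Pi.add_apply, Pi.smul_apply, one_apply,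
    Pi.single_apply, eq_comm (a := m'), Matrix.sub_apply, Matrix.smul_apply, Matrix.add_apply,
    vecMulVec_apply]
  split_ifs <;> field_simp <;> ring

theorem posSemidef_card_sub_two_smul_one_add_smul_one_add_vecMulVec :
    (((Fintype.card n : ℝ) - 2) • (1 : Matrix n n ℝ)
      + (2 / (1 + v ⬝ᵥ v)) • (1 + vecMulVec v v)).PosSemidef := by
  rcases le_or_gt 2 (Fintype.card n) with hn | hn
  · have hn' : (0 : ℝ) ≤ (Fintype.card n : ℝ) - 2 := by
      rw [sub_nonneg]; exact_mod_cast hn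
    have hvv := posSemidef_vecMulVec_self_star v
    rw [star_trivial] at hvv
    exact (PosSemidef.one.smul hn').add ((PosSemidef.one.add hvv).smul
      (div_nonneg zero_le_two (one_add_dotProduct_self_pos v).le))
  · have : Subsingleton n := Fintype.card_le_one_iff_subsingleton.1 (by omega)
    have hvv : vecMulVec v v = (v ⬝ᵥ v) • 1 := by
      ext i j
      rw [Subsingleton.elim i j]
      simp [vecMulVec_apply, dotProduct, Fintype.sum_subsingleton _ j]
    have hs := (one_add_dotProduct_self_pos v).ne'
    have heq : ((Fintype.card n : ℝ) - 2) • (1 : Matrix n n ℝ)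
        + (2 / (1 + v ⬝ᵥ v)) • (1 + vecMulVec v v) = (Fintype.card n : ℝ) • 1 := by
      rw [hvv]
      match_scalars
      field_simp
      ring
    rw [heq]
    exact PosSemidef.one.smul (Nat.cast_nonneg _)

end Algebra

theorem EuclideanSpace.real_norm_sq_eq_dotProduct {ι : Type*} [Fintype ι]
    (x : EuclideanSpace ℝ ι) : ‖x‖ ^ 2 = x.ofLp ⬝ᵥ x.ofLp := by
  rw [EuclideanSpace.real_norm_sq_eq]
  simp only [dotProduct, sq]

theorem hasFDerivAt_sqrt_one_add_norm_sq {F : Type*} [NormedAddCommGroup F]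
    [InnerProductSpace ℝ F] (p : F) :
    HasFDerivAt (fun q : F => √(1 + ‖q‖ ^ 2)) ((√(1 + ‖p‖ ^ 2))⁻¹ • innerSL ℝ p) p :=
  (((hasFDerivAt_id p).norm_sq.const_add 1).sqrt (by positivity)).congr_fderiv <| by
    ext v
    simp only [one_div, _root_.mul_inv_rev, ContinuousLinearMap.comp_id, _root_.smul_apply,
      coe_innerSL_apply, nsmul_eq_mul, Nat.cast_ofNat, smul_eq_mul, id_eq]
    ring

variable {d : ℕ}

theorem gradA_eq (i j : Fin d) (p : EuclideanSpace ℝ (Fin d)) :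
    gradA d i j p = (√(1 + ‖p‖ ^ 2))⁻¹ • (p j • Pi.single i 1 + p i • Pi.single j 1
      - (((if i = j then 1 else 0) + p i * p j) / (1 + ‖p‖ ^ 2)) • p.ofLp) := by
  have hs : √(1 + ‖p‖ ^ 2) ≠ 0 := (Real.sqrt_pos.2 (by positivity)).ne'
  have hnum := ((EuclideanSpace.proj (𝕜 := ℝ) i).hasFDerivAt (x := p).mul
      (EuclideanSpace.proj (𝕜 := ℝ) j).hasFDerivAt).const_add (if i = j then (1 : ℝ) else 0)
  have h : HasFDerivAt (aEntry d i j) _ p :=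
    hnum.mul ((hasDerivAt_inv hs).comp_hasFDerivAt p (hasFDerivAt_sqrt_one_add_norm_sq p))
  funext m
  rw [gradA, h.fderiv]
  simp only [EuclideanSpace.coe_proj, Pi.mul_apply, PiLp.proj_apply, smul_add, smul_neg, neg_smul,
    _root_.add_apply, _root_.neg_apply, _root_.smul_apply, coe_innerSL_apply,
    EuclideanSpace.inner_single_right, Real.ringHom_apply, PiLp.single_apply, Pi.smul_apply,
    Pi.sub_apply, Pi.add_apply, Pi.single_apply, eq_comm (a := m), smul_eq_mul, mul_ite, mul_one,
    mul_zero, one_mul, Real.sq_sqrt (by positivity : (0 : ℝ) ≤ 1 + ‖p‖ ^ 2)]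
  split_ifs <;> field_simp <;> ring

theorem mulVec_gradA_apply (i j m : Fin d) (p : EuclideanSpace ℝ (Fin d)) :
    ((1 + vecMulVec p.ofLp p.ofLp) *ᵥ gradA d i j p) m
      = scaledGrad p.ofLp m i j / √(1 + ‖p‖ ^ 2) := by
  have hs := (one_add_dotProduct_self_pos p.ofLp).ne'
  rw [gradA_eq, EuclideanSpace.real_norm_sq_eq_dotProduct]
  simp only [mulVec_smul, add_mulVec, one_mulVec, vecMulVec_mulVec, op_smul_eq_smul,
    dotProduct_sub, dotProduct_add, dotProduct_smul, dotProduct_single_one, smul_eq_mul,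
    Pi.smul_apply, Pi.add_apply, Pi.sub_apply, Pi.single_apply, scaledGrad, Matrix.add_apply,
    Matrix.smul_apply, Matrix.sub_apply, vecMulVec_apply, one_apply, eq_comm (a := m)]
  field_simp
  ring

theorem sum_coeff_mul_mulVec_gradA_eq_trace (p : EuclideanSpace ℝ (Fin d)) (m m' : Fin d) :
    ∑ k, ∑ l, ∑ i, ∑ j,
      √(1 + ‖p‖ ^ 2) ^ 2 * ((if k = l then 1 else 0) - p k * p l / √(1 + ‖p‖ ^ 2) ^ 2) *
          ((if i = j then 1 else 0) - p i * p j / √(1 + ‖p‖ ^ 2) ^ 2) *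
        (((1 + vecMulVec p.ofLp p.ofLp) *ᵥ gradA d l j p) m
          * ((1 + vecMulVec p.ofLp p.ofLp) *ᵥ gradA d k i p) m')
      = trace (reducedGrad p.ofLp m * reducedGrad p.ofLp m') := by
  have hs : √(1 + ‖p‖ ^ 2) ≠ 0 := (Real.sqrt_pos.2 (by positivity)).ne'
  rw [← one_sub_smul_vecMulVec_mul_scaledGrad, ← one_sub_smul_vecMulVec_mul_scaledGrad,
    ← mul_assoc, trace_mul_mul_mul]
  refine Finset.sum_congr rfl fun k _ => Finset.sum_congr rfl fun l _ =>
    Finset.sum_congr rfl fun i _ => Finset.sum_congr rfl fun j _ => ?_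
  rw [mulVec_gradA_apply, mulVec_gradA_apply, (isSymm_scaledGrad _ m').apply k i,
    Real.sq_sqrt (by positivity), ← EuclideanSpace.real_norm_sq_eq_dotProduct]
  simp only [Matrix.sub_apply, Matrix.smul_apply, one_apply, vecMulVec_apply, smul_eq_mul,
    eq_comm (a := j)]
  field_simp
  rw [Real.sq_sqrt (by positivity)]
  ring

/-- The identity
`Σ_{k,l,i,j} p₀² (δ_{kl} − p_k p_l/p₀²)(δ_{ij} − p_i p_j/p₀²)
   ((I+p⊗p)∇a_{lj}) ⊗ ((I+p⊗p)∇a_{ki}) = d(I+p⊗p) − (d−2) I − (2/p₀²)(I+p⊗p)`,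
and this matrix is `≤ d (I + p⊗p)` in the Loewner order. -/
theorem gradA_sum' (d : ℕ) (p : EuclideanSpace ℝ (Fin d)) :
    let p₀ : ℝ := Real.sqrt (1 + ‖p‖ ^ 2)
    let pp : Matrix (Fin d) (Fin d) ℝ := Matrix.vecMulVec (fun m => p m) (fun m => p m)
    let B : Matrix (Fin d) (Fin d) ℝ := 1 + pp
    let S : Matrix (Fin d) (Fin d) ℝ :=
      ∑ k, ∑ l, ∑ i, ∑ j,
        (p₀ ^ 2 * ((if k = l then 1 else 0) - p k * p l / p₀ ^ 2) *
            ((if i = j then 1 else 0) - p i * p j / p₀ ^ 2)) •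
          Matrix.vecMulVec (B.mulVec (gradA d l j p)) (B.mulVec (gradA d k i p))
    S = (d : ℝ) • B - ((d : ℝ) - 2) • (1 : Matrix (Fin d) (Fin d) ℝ) - (2 / p₀ ^ 2) • B
      ∧ Matrix.PosSemidef ((d : ℝ) • B - S) := by
  intro p₀ pp B S
  have hp₀ : p₀ ^ 2 = 1 + p.ofLp ⬝ᵥ p.ofLp := by
    rw [Real.sq_sqrt (by positivity), EuclideanSpace.real_norm_sq_eq_dotProduct]
  have hB : B = 1 + vecMulVec p.ofLp p.ofLp := rfl
  have hS : ∀ m m', S m m' = trace (reducedGrad p.ofLp m * reducedGrad p.ofLp m') := by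
    intro m m'
    simp only [S, Matrix.sum_apply, Matrix.smul_apply, vecMulVec_apply, smul_eq_mul]
    exact sum_coeff_mul_mulVec_gradA_eq_trace p m m'
  have hid : S = (d : ℝ) • B - ((d : ℝ) - 2) • (1 : Matrix (Fin d) (Fin d) ℝ)
      - (2 / p₀ ^ 2) • B := by
    ext m m'
    rw [hS, trace_reducedGrad_mul, Fintype.card_fin, hp₀]
  refine ⟨hid, ?_⟩
  have hdiff : (d : ℝ) • B - S
      = ((d : ℝ) - 2) • (1 : Matrix (Fin d) (Fin d) ℝ) + (2 / p₀ ^ 2) • B := by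
    rw [hid]; abel
  rw [hdiff, hp₀, hB]
  simpa only [Fintype.card_fin] using
    posSemidef_card_sub_two_smul_one_add_smul_one_add_vecMulVec p.ofLp
end

section
/- For all p ∈ ℝ^d and every i ∈ {1,…,d}, writing p̃ := p − e_i and E_i := e_i ⊗ e_i, one has (1/p0^3)(I − p⊗p/p0^2) − (1/p0^5)(2 p_i I − e_i⊗p − p⊗e_i) = (1/p0^5) E_i + (1/p0^5)(|p̃|² I − p̃ ⊗ p̃), and consequently this matrix is positive semidefinite. -/
/-! Multiplied by `p₀⁵` and with `p₀² = 1 + |p|²`, the identity reduces to `|p̃|² = |p|² − 2pᵢ + 1`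
and the bilinearity of `⊗`. Positivity then holds termwise: `e_i ⊗ e_i` is a Gram matrix and
`|p̃|² I − p̃ ⊗ p̃` is positive semidefinite by Cauchy–Schwarz. -/

open Matrix

variable {n : Type*} [Fintype n] [DecidableEq n]

theorem Matrix.posSemidef_sum_sq_smul_one_sub_vecMulVec (v : n → ℝ) :
    ((∑ m, v m ^ 2) • (1 : Matrix n n ℝ) - vecMulVec v v).PosSemidef := by
  refine .of_dotProduct_mulVec_nonneg
    ((isHermitian_one.smul (.all _)).sub (posSemidef_vecMulVec_self_star v).isHermitian)
    fun x => ?_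
  have hcs := Finset.sum_mul_sq_le_sq_mul_sq Finset.univ v x
  simp only [star_trivial, sub_mulVec, smul_mulVec, one_mulVec, vecMulVec_mulVec,
    dotProduct_sub, dotProduct_smul, MulOpposite.smul_eq_mul_unop, MulOpposite.unop_op]
  rw [dotProduct_comm x v, smul_eq_mul, sub_nonneg]
  simpa only [dotProduct, sq] using hcs

theorem sum_sub_single_one_sq {R : Type*} [CommRing R] (p : n → R) (i : n) :
    ∑ m, (p - Pi.single i 1 : n → R) m ^ 2 = ∑ m, p m ^ 2 - 2 * p i + 1 := by
  simp [sub_sq, Finset.sum_add_distrib, Finset.sum_sub_distrib, Pi.single_apply]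

/-- With `p̃ = p − e_i` and `E_i = e_i⊗e_i`,
`(1/p₀³)(I − p⊗p/p₀²) − (1/p₀⁵)(2p_i I − e_i⊗p − p⊗e_i)
  = (1/p₀⁵)E_i + (1/p₀⁵)(|p̃|² I − p̃⊗p̃)`, and this matrix is positive semidefinite. -/
theorem matrix_identity_psd (d : ℕ) (p : Fin d → ℝ) (i : Fin d) :
    let p₀ : ℝ := Real.sqrt (1 + ∑ m, p m ^ 2)
    let e : Fin d → ℝ := Pi.single i 1
    let pt : Fin d → ℝ := p - e
    let L : Matrix (Fin d) (Fin d) ℝ :=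
      (1 / p₀ ^ 3) • ((1 : Matrix (Fin d) (Fin d) ℝ) -
          (1 / p₀ ^ 2) • Matrix.vecMulVec p p)
        - (1 / p₀ ^ 5) • ((2 * p i) • (1 : Matrix (Fin d) (Fin d) ℝ)
            - Matrix.vecMulVec e p - Matrix.vecMulVec p e)
    L = (1 / p₀ ^ 5) • Matrix.vecMulVec e e
        + (1 / p₀ ^ 5) • ((∑ m, pt m ^ 2) • (1 : Matrix (Fin d) (Fin d) ℝ)
            - Matrix.vecMulVec pt pt)
      ∧ L.PosSemidef := by
  intro p₀ e pt L
  have hp₀ : p₀ ^ 2 = 1 + ∑ m, p m ^ 2 := Real.sq_sqrt (by positivity)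
  have hp₀_pos : 0 < p₀ := Real.sqrt_pos.mpr (by positivity)
  have hpt : ∑ m, pt m ^ 2 = p₀ ^ 2 - 2 * p i := by
    rw [sum_sub_single_one_sq, hp₀]; ring
  have hptpt :
      vecMulVec pt pt = vecMulVec p p - vecMulVec e p - vecMulVec p e + vecMulVec e e := by
    simp only [pt, sub_vecMulVec, vecMulVec_sub]; abel
  have hL : L = (1 / p₀ ^ 5) • vecMulVec e e
      + (1 / p₀ ^ 5) • ((∑ m, pt m ^ 2) • (1 : Matrix (Fin d) (Fin d) ℝ) - vecMulVec pt pt) := by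
    rw [hpt, hptpt]
    match_scalars <;> field_simp
    ring
  have hc : 0 ≤ 1 / p₀ ^ 5 := by positivity
  refine ⟨hL, hL ▸ .add ?_ ?_⟩
  · exact (posSemidef_vecMulVec_self_star e).smul hc
  · exact (posSemidef_sum_sq_smul_one_sub_vecMulVec pt).smul hc
end

section
/- Let P(x,p) be the 2d×2d block matrix with blocks P₁₁ = (2ε³/(V₀³p₀³))(I − p⊗p/p₀²), P₁₂ = P₂₁ = (ε²/(V₀²p₀²)) I, P₂₂ = (2ε/(V₀p₀))(I + p⊗p), where ε > 0, V₀ = V₀(x) ≥ 1, p₀ = sqrt(1+|p|²). Then diag((ε³/(V₀³p₀³))(I − p⊗p/p₀²), (ε/(V₀p₀))(I + p⊗p)) ≤ P ≤ diag((3ε³/(V₀³p₀³))(I − p⊗p/p₀²), (3ε/(V₀p₀))(I + p⊗p)) in the Loewner order; in particular P is positive definite. -/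
/-! Sherman–Morrison gives `I − p⊗p/p₀² = B⁻¹` for `B = I + p⊗p`, so the three matrices in
question all have the shape `[[a B⁻¹, b I], [b I, c B]]` with `a > 0`. The Schur complement of
the upper left block is `(c − b²/a) B`, hence such a matrix is positive semidefinite when
`b² ≤ ac` and positive definite when `b² < ac`. The two Loewner differences have `b² = ac`,
and `P` itself has `b² = ac/4`. -/

open scoped ComplexOrder

namespace Matrix

variable {m n : Type*} [Fintype m] [Fintype n] [DecidableEq m] [DecidableEq n]

theorem inv_one_add_vecMulVec {K : Type*} [Field K] (u v : n → K) (h : 1 + v ⬝ᵥ u ≠ 0) :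
    (1 + vecMulVec u v)⁻¹ = 1 - (1 + v ⬝ᵥ u)⁻¹ • vecMulVec u v := by
  refine inv_eq_right_inv ?_
  rw [mul_sub, mul_one, add_mul, one_mul, Matrix.mul_smul, vecMulVec_mul_vecMulVec,
    vecMulVec_smul, smul_smul, ← add_smul, ← mul_one_add, inv_mul_cancel₀ h, one_smul,
    add_sub_cancel_right]

theorem PosDef.posDef_fromBlocks₁₁ {𝕜 : Type*} [RCLike 𝕜] {A : Matrix m m 𝕜} (B : Matrix m n 𝕜)
    (D : Matrix n n 𝕜) (hA : A.PosDef) (hS : (D - Bᴴ * A⁻¹ * B).PosDef) :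
    (fromBlocks A B Bᴴ D).PosDef := by
  let := hA.isUnit.invertible
  rw [((hA.fromBlocks₁₁ B D).2 hS.posSemidef).posDef_iff_det_ne_zero,
    det_fromBlocks₁₁, invOf_eq_nonsing_inv]
  exact mul_ne_zero ((isUnit_iff_isUnit_det _).1 hA.isUnit).ne_zero
    ((isUnit_iff_isUnit_det _).1 hS.isUnit).ne_zero

theorem schur_complement_fromBlocks_smul_inv {M : Matrix n n ℝ} (hM : IsUnit M) {a : ℝ}
    (ha : a ≠ 0) (b c : ℝ) :
    c • M - (b • 1 : Matrix n n ℝ) * (a • M⁻¹)⁻¹ * (b • 1) = (c - b ^ 2 / a) • M := by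
  have hinv : (a • M⁻¹)⁻¹ = a⁻¹ • M := inv_eq_left_inv <| by
    rw [smul_mul_smul_comm, inv_mul_cancel₀ ha, one_smul,
      mul_nonsing_inv _ ((isUnit_iff_isUnit_det _).1 hM)]
  rw [hinv, smul_mul, one_mul, smul_mul, Matrix.mul_smul, mul_one, smul_smul, smul_smul,
    ← sub_smul]
  congr 1
  ring

theorem posSemidef_fromBlocks_smul_inv {M : Matrix n n ℝ} (hM : M.PosDef) {a b c : ℝ}
    (ha : 0 < a) (hb : b ^ 2 ≤ a * c) :
    (fromBlocks (a • M⁻¹) (b • 1) (b • 1) (c • M)).PosSemidef := by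
  let := (hM.inv.smul ha).isUnit.invertible
  have schur := (hM.inv.smul ha).fromBlocks₁₁ (b • 1 : Matrix n n ℝ) (c • M)
  rw [conjTranspose_smul, conjTranspose_one, star_trivial,
    schur_complement_fromBlocks_smul_inv hM.isUnit ha.ne'] at schur
  exact schur.2 (hM.posSemidef.smul (sub_nonneg.2 ((div_le_iff₀' ha).2 hb)))

theorem posDef_fromBlocks_smul_inv {M : Matrix n n ℝ} (hM : M.PosDef) {a b c : ℝ}
    (ha : 0 < a) (hb : b ^ 2 < a * c) :
    (fromBlocks (a • M⁻¹) (b • 1) (b • 1) (c • M)).PosDef := by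
  have schur := (hM.inv.smul ha).posDef_fromBlocks₁₁ (b • 1 : Matrix n n ℝ) (c • M)
  rw [conjTranspose_smul, conjTranspose_one, star_trivial,
    schur_complement_fromBlocks_smul_inv hM.isUnit ha.ne'] at schur
  exact schur (hM.smul (sub_pos.2 ((div_lt_iff₀' ha).2 hb)))

end Matrix

open Matrix

/-- The block matrix `P(x,p)` with blocks
`P₁₁ = (2ε³/(V₀³p₀³))(I − p⊗p/p₀²)`, `P₁₂ = P₂₁ = (ε²/(V₀²p₀²)) I`,
`P₂₂ = (2ε/(V₀p₀))(I + p⊗p)` satisfies the two-sided Loewner bound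
`diag((ε³/(V₀³p₀³))(I − p⊗p/p₀²), (ε/(V₀p₀))(I + p⊗p)) ≤ P ≤ 3·(same diag)`,
and in particular `P` is positive definite. -/
theorem P_sandwich (d : ℕ) (p : Fin d → ℝ) (V₀ ε : ℝ) (hV₀ : 1 ≤ V₀) (hε : 0 < ε) :
    let p₀ : ℝ := Real.sqrt (1 + ∑ i, p i ^ 2)
    let A : Matrix (Fin d) (Fin d) ℝ :=
      (1 : Matrix (Fin d) (Fin d) ℝ) - (1 / p₀ ^ 2) • Matrix.vecMulVec p p
    let B : Matrix (Fin d) (Fin d) ℝ :=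
      (1 : Matrix (Fin d) (Fin d) ℝ) + Matrix.vecMulVec p p
    let P : Matrix (Fin d ⊕ Fin d) (Fin d ⊕ Fin d) ℝ :=
      Matrix.fromBlocks ((2 * ε ^ 3 / (V₀ ^ 3 * p₀ ^ 3)) • A)
        ((ε ^ 2 / (V₀ ^ 2 * p₀ ^ 2)) • (1 : Matrix (Fin d) (Fin d) ℝ))
        ((ε ^ 2 / (V₀ ^ 2 * p₀ ^ 2)) • (1 : Matrix (Fin d) (Fin d) ℝ))
        ((2 * ε / (V₀ * p₀)) • B)
    Matrix.PosSemidef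
      (P - Matrix.fromBlocks ((ε ^ 3 / (V₀ ^ 3 * p₀ ^ 3)) • A) 0 0 ((ε / (V₀ * p₀)) • B))
    ∧ Matrix.PosSemidef
      (Matrix.fromBlocks ((3 * ε ^ 3 / (V₀ ^ 3 * p₀ ^ 3)) • A) 0 0
          ((3 * ε / (V₀ * p₀)) • B) - P)
    ∧ P.PosDef := by
  intro p₀ A B P
  have hsum : ∑ i, p i ^ 2 = p ⬝ᵥ p := by simp [dotProduct, sq]
  have hq : 0 < 1 + ∑ i, p i ^ 2 := by positivity
  have hp₀ : 0 < p₀ := Real.sqrt_pos.2 hq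
  have hp₀sq : p₀ ^ 2 = 1 + p ⬝ᵥ p := by rw [← hsum]; exact Real.sq_sqrt hq.le
  have hA : A = B⁻¹ := by
    rw [inv_one_add_vecMulVec p p (by rw [← hp₀sq]; positivity), ← hp₀sq, ← one_div]
  have hB : B.PosDef := PosDef.one.add_posSemidef (by simpa using posSemidef_vecMulVec_self_star p)
  have hV₀ : 0 < V₀ := one_pos.trans_le hV₀
  have ha : 0 < ε ^ 3 / (V₀ ^ 3 * p₀ ^ 3) := by positivity
  have hc : 0 < ε / (V₀ * p₀) := by positivity
  have hb : (ε ^ 2 / (V₀ ^ 2 * p₀ ^ 2)) ^ 2 = ε ^ 3 / (V₀ ^ 3 * p₀ ^ 3) * (ε / (V₀ * p₀)) := by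
    field_simp
  have hP : P = fromBlocks ((2 * (ε ^ 3 / (V₀ ^ 3 * p₀ ^ 3))) • B⁻¹)
      ((ε ^ 2 / (V₀ ^ 2 * p₀ ^ 2)) • 1) ((ε ^ 2 / (V₀ ^ 2 * p₀ ^ 2)) • 1)
      ((2 * (ε / (V₀ * p₀))) • B) := by
    simp only [P, hA]
    congr 2 <;> ring
  rw [hP, hA]
  refine ⟨?_, ?_, ?_⟩
  · convert posSemidef_fromBlocks_smul_inv hB ha hb.le using 1
    rw [sub_eq_iff_eq_add, fromBlocks_add, ← add_smul, ← add_smul, add_zero, two_mul, two_mul]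
  · convert posSemidef_fromBlocks_smul_inv hB ha (b := -(ε ^ 2 / (V₀ ^ 2 * p₀ ^ 2)))
      (by rw [neg_sq]; exact hb.le) using 1
    rw [sub_eq_iff_eq_add', fromBlocks_add, ← add_smul, ← add_smul, ← add_smul, add_neg_cancel,
      zero_smul]
    congr 2 <;> ring
  · refine posDef_fromBlocks_smul_inv hB (by positivity) ?_
    nlinarith [mul_pos ha hc]
end
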